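/- Define the extended minimum generalized eigenvalue λ_min(X,Y) = inf_{v ∉ ker Y} (vᵀXv)/(vᵀYv) for Y ≠ 0 (and λ_min(X,0) = ∞). Then for Y ≠ 0, λ_min(X,Y) = sup{α ≥ 0 : X − αY ⪰ 0} (with sup ∅ = 0), and λ_min is nonnegative, upper semicontinuous and quasiconcave on 𝕊ⁿ_{⪰0} × 𝕊ⁿ_{⪰0}. -/

import Mathlib

open Matrix
open scoped ENNReal

/-- Extended minimum generalized eigenvalue: `sup {α ≥ 0 | X − αY ⪰ 0}` with `sup ∅ = 0`.
(For `Y = 0` and `X ⪰ 0` this gives `∞`, matching `λ_min(X,0) = ∞`.) -/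
noncomputable def lamMin {n : ℕ} (X Y : Matrix (Fin n) (Fin n) ℝ) : ℝ≥0∞ :=
  ⨆ α : {α : ℝ // 0 ≤ α ∧ (X - α • Y).PosSemidef}, ENNReal.ofReal (α : ℝ)

/-!
`X - α • Y ⪰ 0` says `α * vᵀYv ≤ vᵀXv` for every `v`. On `ker Y` this holds because `X ⪰ 0`;
off `ker Y` we have `vᵀYv > 0`, and it says that `α` is at most the Rayleigh quotient
`vᵀXv / vᵀYv`. So `α` is feasible exactly when `ofReal α` lies below the infimum of the
Rayleigh quotients, which identifies `lamMin X Y` with that infimum, and the superlevel set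
`{λ_min ≥ α}` with `{X ⪰ 0, Y ⪰ 0, X - α • Y ⪰ 0}`: an intersection of preimages of the
closed convex cone of positive semidefinite matrices under linear maps.
-/

namespace Matrix

variable {ι : Type*}

theorem convex_setOf_posSemidef : Convex ℝ {M : Matrix ι ι ℝ | M.PosSemidef} :=
  fun _ hA _ hB _ _ ha hb _ => (hA.smul ha).add (hB.smul hb)

variable [Fintype ι]

theorem isClosed_setOf_posSemidef : IsClosed {M : Matrix ι ι ℝ | M.PosSemidef} := by
  have h : {M : Matrix ι ι ℝ | M.PosSemidef} =
      {M | Mᴴ = M} ∩ ⋂ v : ι → ℝ, {M | 0 ≤ star v ⬝ᵥ (M *ᵥ v)} := by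
    ext M
    simp only [Set.mem_ofPred_eq, Set.mem_inter_iff, Set.mem_iInter]
    exact posSemidef_iff_dotProduct_mulVec
  rw [h]
  exact (isClosed_eq continuous_id.matrix_conjTranspose continuous_id).inter
    (isClosed_iInter fun v => isClosed_le continuous_const
      (continuous_const.dotProduct (continuous_id.matrix_mulVec continuous_const)))

theorem PosSemidef.dotProduct_mulVec_pos_of_mulVec_ne_zero {Y : Matrix ι ι ℝ}
    (hY : Y.PosSemidef) {v : ι → ℝ} (hv : Y *ᵥ v ≠ 0) : 0 < v ⬝ᵥ (Y *ᵥ v) := by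
  have hne : v ⬝ᵥ (Y *ᵥ v) ≠ 0 := by
    simpa using mt (hY.dotProduct_mulVec_zero_iff v).1 hv
  exact (by simpa using hY.dotProduct_mulVec_nonneg v : 0 ≤ v ⬝ᵥ (Y *ᵥ v)).lt_of_ne' hne

noncomputable def rayleighInf (X Y : Matrix ι ι ℝ) : ℝ≥0∞ :=
  ⨅ v : {v : ι → ℝ // Y *ᵥ v ≠ 0},
    ENNReal.ofReal ((v : ι → ℝ) ⬝ᵥ (X *ᵥ (v : ι → ℝ)) / (v : ι → ℝ) ⬝ᵥ (Y *ᵥ (v : ι → ℝ)))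

variable {X Y : Matrix ι ι ℝ}

theorem posSemidef_sub_smul_iff (hX : X.PosSemidef) (hY : Y.PosSemidef) (α : ℝ) :
    (X - α • Y).PosSemidef ↔
      ∀ v : ι → ℝ, Y *ᵥ v ≠ 0 → α ≤ v ⬝ᵥ (X *ᵥ v) / v ⬝ᵥ (Y *ᵥ v) := by
  have hform : ∀ v : ι → ℝ,
      v ⬝ᵥ ((X - α • Y) *ᵥ v) = v ⬝ᵥ (X *ᵥ v) - α * v ⬝ᵥ (Y *ᵥ v) := fun v => by
    simp only [sub_mulVec, smul_mulVec, dotProduct_sub, dotProduct_smul, smul_eq_mul]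
  constructor
  · intro h v hv
    have := h.dotProduct_mulVec_nonneg v
    rw [star_trivial, hform] at this
    rw [le_div_iff₀ (hY.dotProduct_mulVec_pos_of_mulVec_ne_zero hv)]
    linarith
  · intro h
    refine .of_dotProduct_mulVec_nonneg (hX.isHermitian.sub (hY.isHermitian.smul (.all α)))
      fun v => ?_
    rw [star_trivial, hform, sub_nonneg]
    by_cases hv : Y *ᵥ v = 0
    · simpa [hv] using hX.dotProduct_mulVec_nonneg v
    · exact (le_div_iff₀ (hY.dotProduct_mulVec_pos_of_mulVec_ne_zero hv)).1 (h v hv)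

theorem ofReal_le_rayleighInf_iff (hX : X.PosSemidef) (hY : Y.PosSemidef) (α : ℝ) :
    ENNReal.ofReal α ≤ rayleighInf X Y ↔ (X - α • Y).PosSemidef := by
  rw [posSemidef_sub_smul_iff hX hY, rayleighInf, le_iInf_iff, Subtype.forall]
  refine forall₂_congr fun v _ => ENNReal.ofReal_le_ofReal_iff (div_nonneg ?_ ?_)
  · simpa using hX.dotProduct_mulVec_nonneg v
  · simpa using hY.dotProduct_mulVec_nonneg v

end Matrix

section

variable {n : ℕ} {X Y : Matrix (Fin n) (Fin n) ℝ}

theorem lamMin_eq_rayleighInf (hX : X.PosSemidef) (hY : Y.PosSemidef) :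
    lamMin X Y = rayleighInf X Y := by
  refine le_antisymm (iSup_le fun α => (ofReal_le_rayleighInf_iff hX hY α).2 α.2.2)
    (le_of_forall_lt_imp_le_of_dense fun c hc => ?_)
  lift c to NNReal using hc.ne_top
  rw [← ENNReal.ofReal_coe_nnreal] at hc ⊢
  exact le_iSup_of_le ⟨c, c.2, (ofReal_le_rayleighInf_iff hX hY _).1 hc.le⟩ le_rfl

theorem ofReal_le_lamMin_iff (hX : X.PosSemidef) (hY : Y.PosSemidef) (α : ℝ) :
    ENNReal.ofReal α ≤ lamMin X Y ↔ (X - α • Y).PosSemidef := by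
  rw [lamMin_eq_rayleighInf hX hY, ofReal_le_rayleighInf_iff hX hY]

theorem setOf_ofReal_le_lamMin (α : ℝ) :
    {p : Matrix (Fin n) (Fin n) ℝ × Matrix (Fin n) (Fin n) ℝ |
        p.1.PosSemidef ∧ p.2.PosSemidef ∧ ENNReal.ofReal α ≤ lamMin p.1 p.2} =
      {p | p.1.PosSemidef ∧ p.2.PosSemidef ∧ (p.1 - α • p.2).PosSemidef} := by
  ext ⟨X, Y⟩
  exact and_congr_right fun hX => and_congr_right fun hY => ofReal_le_lamMin_iff hX hY α

end

/-- For PSD `X, Y` with `Y ≠ 0`, the infimum over `v ∉ ker Y` of the Rayleigh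
quotient `(vᵀXv)/(vᵀYv)` equals `sup {α ≥ 0 | X − αY ⪰ 0}`; and `λ_min` is nonnegative,
upper semicontinuous and quasiconcave on `𝕊ⁿ_{⪰0} × 𝕊ⁿ_{⪰0}`: its superlevel sets are
closed and convex. -/
theorem stmt_17 {n : ℕ} :
    (∀ X Y : Matrix (Fin n) (Fin n) ℝ, X.PosSemidef → Y.PosSemidef → Y ≠ 0 →
      (⨅ v : {v : Fin n → ℝ // Y *ᵥ v ≠ 0},
          ENNReal.ofReal (((v : Fin n → ℝ) ⬝ᵥ (X *ᵥ (v : Fin n → ℝ))) /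
            ((v : Fin n → ℝ) ⬝ᵥ (Y *ᵥ (v : Fin n → ℝ))))) = lamMin X Y) ∧
    (∀ α : ℝ,
      IsClosed {p : Matrix (Fin n) (Fin n) ℝ × Matrix (Fin n) (Fin n) ℝ |
        p.1.PosSemidef ∧ p.2.PosSemidef ∧ ENNReal.ofReal α ≤ lamMin p.1 p.2} ∧
      Convex ℝ {p : Matrix (Fin n) (Fin n) ℝ × Matrix (Fin n) (Fin n) ℝ |
        p.1.PosSemidef ∧ p.2.PosSemidef ∧ ENNReal.ofReal α ≤ lamMin p.1 p.2}) := by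
  refine ⟨fun X Y hX hY _ => (lamMin_eq_rayleighInf hX hY).symm, fun α => ?_⟩
  rw [setOf_ofReal_le_lamMin]
  let L : Matrix (Fin n) (Fin n) ℝ × Matrix (Fin n) (Fin n) ℝ →ₗ[ℝ] Matrix (Fin n) (Fin n) ℝ :=
    LinearMap.fst ℝ _ _ - α • LinearMap.snd ℝ _ _
  constructor
  · exact (isClosed_setOf_posSemidef.preimage continuous_fst).inter
      ((isClosed_setOf_posSemidef.preimage continuous_snd).inter
        (isClosed_setOf_posSemidef.preimage L.continuous_of_finiteDimensional))
  · exact (convex_setOf_posSemidef.linear_preimage (LinearMap.fst ℝ _ _)).inter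
      ((convex_setOf_posSemidef.linear_preimage (LinearMap.snd ℝ _ _)).inter
        (convex_setOf_posSemidef.linear_preimage L))
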